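/- arXiv:2510.00679 — 3 statements merged into one kernel-verified Lean document; each statement's English description precedes it below -/
import Mathlib

section
/- In the polynomial ring ℂ[t₁,t₂], the ideal generated by p₁ = t₁(2t₁ − 4t₂ + 1) and p₂ = t₂(2t₂ − 4t₁ + 1) equals the intersection of the four ideals I₁ = ⟨t₁, t₂⟩, I₂ = ⟨t₁, t₂ + 1/2⟩, I₃ = ⟨t₁ + 1/2, t₂⟩, and I₄ = ⟨t₁ − 1/2, t₂ − 1/2⟩. -/
/-!
Write p₁ = x a and p₂ = y b with x = t₁, y = t₂, a = 2t₁ − 4t₂ + 1, b = 2t₂ − 4t₁ + 1. Up to an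
invertible change of generators the four ideals are ⟨x, y⟩, ⟨x, b⟩, ⟨a, y⟩, ⟨a, b⟩, and each of
them visibly contains ⟨x a, y b⟩. Conversely, the intersection of two comaximal ideals is their
product and ⟨c, u⟩⟨c, v⟩ ⊆ ⟨c, u v⟩, so
⟨x, y⟩ ∩ ⟨a, y⟩ ⊆ ⟨x a, y⟩, ⟨x, b⟩ ∩ ⟨a, b⟩ ⊆ ⟨x a, b⟩ and ⟨x a, y⟩ ∩ ⟨x a, b⟩ ⊆ ⟨x a, y b⟩.
The three comaximality conditions are checked by explicit combinations equal to 1 or 3.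
-/

open MvPolynomial

noncomputable def t₁ : MvPolynomial (Fin 2) ℂ := X 0
noncomputable def t₂ : MvPolynomial (Fin 2) ℂ := X 1

namespace Ideal

variable {R : Type*} [CommRing R]

theorem span_pair_mul_span_pair_le (c u v : R) :
    span {c, u} * span {c, v} ≤ span {c, u * v} := by
  rw [span_pair_mul_span_pair, span_le]
  rintro z (rfl | rfl | rfl | rfl) <;> rw [SetLike.mem_coe, mem_span_pair]
  exacts [⟨c, 0, by ring⟩, ⟨v, 0, by ring⟩, ⟨u, 0, by ring⟩, ⟨0, 1, by ring⟩]

theorem inf_span_pair_le_span_pair_mul {c u v : R} (h : span {c, u} ⊔ span {c, v} = ⊤) :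
    span {c, u} ⊓ span {c, v} ≤ span {c, u * v} :=
  mul_eq_inf_of_coprime h ▸ span_pair_mul_span_pair_le c u v

theorem inf_span_pair_le_span_pair_mul' {c u v : R} (h : span {u, c} ⊔ span {v, c} = ⊤) :
    span {u, c} ⊓ span {v, c} ≤ span {u * v, c} := by
  rw [Set.pair_comm u, Set.pair_comm v, Set.pair_comm _ c] at *
  exact inf_span_pair_le_span_pair_mul h

theorem span_pair_sup_span_pair_eq_top {x y z w u : R} (hu : IsUnit u) (c₁ c₂ d₁ d₂ : R)
    (h : c₁ * x + c₂ * y + (d₁ * z + d₂ * w) = u) : span {x, y} ⊔ span {z, w} = ⊤ :=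
  eq_top_of_isUnit_mem _ (Submodule.mem_sup.mpr ⟨_, mem_span_pair.mpr ⟨c₁, c₂, rfl⟩,
    _, mem_span_pair.mpr ⟨d₁, d₂, rfl⟩, h⟩) hu

theorem span_pair_eq_of_isUnit_det {x y x' y' α β γ δ : R} (hx' : x' = α * x + β * y)
    (hy' : y' = γ * x + δ * y) (hdet : IsUnit (α * δ - β * γ)) :
    span {x', y'} = span {x, y} := by
  refine le_antisymm (span_le.mpr ?_) (span_le.mpr ?_) <;> rintro z (rfl | rfl)
  · exact mem_span_pair.mpr ⟨α, β, hx'.symm⟩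
  · exact mem_span_pair.mpr ⟨γ, δ, hy'.symm⟩
  · exact (unit_mul_mem_iff_mem _ hdet).mp (mem_span_pair.mpr ⟨δ, -β, by rw [hx', hy']; ring⟩)
  · exact (unit_mul_mem_iff_mem _ hdet).mp (mem_span_pair.mpr ⟨-γ, α, by rw [hx', hy']; ring⟩)

theorem span_mul_pair_eq_inf {x y a b : R} (hy : span {x, y} ⊔ span {a, y} = ⊤)
    (hb : span {x, b} ⊔ span {a, b} = ⊤) (hxa : span {x * a, y} ⊔ span {x * a, b} = ⊤) :
    span {x * a, y * b} = span {x, y} ⊓ span {x, b} ⊓ span {a, y} ⊓ span {a, b} := by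
  refine le_antisymm ?_ ?_
  · simp only [le_inf_iff, span_le, Set.insert_subset_iff, Set.singleton_subset_iff,
      SetLike.mem_coe]
    refine ⟨⟨⟨⟨?_, ?_⟩, ?_, ?_⟩, ?_, ?_⟩, ?_, ?_⟩ <;>
      first
      | exact mul_mem_right _ _ (subset_span (Set.mem_insert _ _))
      | exact mul_mem_left _ _ (subset_span (Set.mem_insert _ _))
      | exact mul_mem_right _ _ (subset_span (Set.mem_insert_of_mem _ rfl))
      | exact mul_mem_left _ _ (subset_span (Set.mem_insert_of_mem _ rfl))
  · calc span {x, y} ⊓ span {x, b} ⊓ span {a, y} ⊓ span {a, b}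
        = (span {x, y} ⊓ span {a, y}) ⊓ (span {x, b} ⊓ span {a, b}) := by ac_rfl
      _ ≤ span {x * a, y} ⊓ span {x * a, b} := inf_le_inf (inf_span_pair_le_span_pair_mul' hy)
          (inf_span_pair_le_span_pair_mul' hb)
      _ ≤ span {x * a, y * b} := inf_span_pair_le_span_pair_mul hxa

end Ideal

theorem isUnit_ofNat_of_algebraRat {A : Type*} [Semiring A] [Algebra ℚ A] (n : ℕ) [n.AtLeastTwo] :
    IsUnit (OfNat.ofNat n : A) :=
  map_ofNat (algebraMap ℚ A) n ▸ (IsUnit.mk0 (OfNat.ofNat n : ℚ) (NeZero.ne _)).map _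

theorem MvPolynomial.two_mul_C_half {σ K : Type*} [Field K] [NeZero (2 : K)] :
    (2 : MvPolynomial σ K) * C (1 / 2) = 1 := by
  rw [← map_ofNat C 2, ← C_mul, mul_one_div_cancel two_ne_zero, C_1]

open Ideal

theorem span_t₁_t₂_add_half : span {t₁, t₂ + C (1 / 2 : ℂ)} = span {t₁, 2 * t₂ - 4 * t₁ + 1} :=
  (span_pair_eq_of_isUnit_det (α := 1) (β := 0) (γ := -4) (δ := 2) (by ring)
    (by linear_combination -two_mul_C_half (K := ℂ))
    (by norm_num; exact isUnit_ofNat_of_algebraRat _)).symm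

theorem span_t₁_add_half_t₂ : span {t₁ + C (1 / 2 : ℂ), t₂} = span {2 * t₁ - 4 * t₂ + 1, t₂} :=
  (span_pair_eq_of_isUnit_det (α := 2) (β := -4) (γ := 0) (δ := 1)
    (by linear_combination -two_mul_C_half (K := ℂ)) (by ring)
    (by norm_num; exact isUnit_ofNat_of_algebraRat _)).symm

theorem span_t₁_sub_half_t₂_sub_half :
    span {t₁ - C (1 / 2 : ℂ), t₂ - C (1 / 2 : ℂ)} =
      span {2 * t₁ - 4 * t₂ + 1, 2 * t₂ - 4 * t₁ + 1} :=
  (span_pair_eq_of_isUnit_det (α := 2) (β := -4) (γ := -4) (δ := 2)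
    (by linear_combination -two_mul_C_half (K := ℂ))
    (by linear_combination -two_mul_C_half (K := ℂ))
    (by norm_num; exact isUnit_ofNat_of_algebraRat _)).symm

/-- In ℂ[t₁,t₂], ⟨t₁(2t₁ − 4t₂ + 1), t₂(2t₂ − 4t₁ + 1)⟩
= ⟨t₁,t₂⟩ ∩ ⟨t₁,t₂+1/2⟩ ∩ ⟨t₁+1/2,t₂⟩ ∩ ⟨t₁−1/2,t₂−1/2⟩. -/
theorem stmt_1 :
    Ideal.span {t₁ * (2 * t₁ - 4 * t₂ + 1), t₂ * (2 * t₂ - 4 * t₁ + 1)} =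
      Ideal.span {t₁, t₂} ⊓
        Ideal.span {t₁, t₂ + C (1/2 : ℂ)} ⊓
        Ideal.span {t₁ + C (1/2 : ℂ), t₂} ⊓
        Ideal.span {t₁ - C (1/2 : ℂ), t₂ - C (1/2 : ℂ)} := by
  rw [span_t₁_t₂_add_half, span_t₁_add_half_t₂, span_t₁_sub_half_t₂_sub_half]
  apply span_mul_pair_eq_inf
  · exact span_pair_sup_span_pair_eq_top isUnit_one (-2) 4 1 0 (by ring)
  · exact span_pair_sup_span_pair_eq_top (isUnit_ofNat_of_algebraRat 3) 6 0 1 2 (by ring)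
  · exact span_pair_sup_span_pair_eq_top (isUnit_ofNat_of_algebraRat 3) 8 (24 * t₁ - 6) 0
      (4 * t₁ + 3) (by ring)
end

section
/- The quotient ring ℂ[t₁,t₂]/⟨p₁, p₂⟩, where p₁ = t₁(2t₁ − 4t₂ + 1) and p₂ = t₂(2t₂ − 4t₁ + 1), is isomorphic as a ℂ-algebra to the product ℂ × ℂ × ℂ × ℂ; in particular it is a finite-dimensional semisimple commutative ℂ-algebra of dimension 4 over ℂ. -/
open MvPolynomial

/-- The ideal ⟨p₁, p₂⟩ with p₁ = t₁(2t₁ − 4t₂ + 1), p₂ = t₂(2t₂ − 4t₁ + 1). -/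
noncomputable def J : Ideal (MvPolynomial (Fin 2) ℂ) :=
  Ideal.span {t₁ * (2 * t₁ - 4 * t₂ + 1), t₂ * (2 * t₂ - 4 * t₁ + 1)}

/-!
The points (0,0), (0,-1/2), (-1/2,0), (1/2,1/2) are common zeros of p₁ and p₂, so evaluation at
them factors through the quotient, and Lagrange interpolation makes the induced map onto ℂ⁴
surjective. Conversely, p₁ and p₂ rewrite t₁², t₂², t₁²t₂ and t₁t₂² as combinations of
1, t₁, t₂, t₁t₂, so these four classes span the quotient, which therefore has dimension at most 4;
a surjection onto ℂ⁴ from a space of dimension at most 4 is an isomorphism.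
-/

theorem MvPolynomial.submodule_eq_top_of_mul_X_mem {σ R A : Type*} [CommSemiring R]
    [CommSemiring A] [Algebra R A] {f : MvPolynomial σ R →ₐ[R] A} (hf : Function.Surjective f)
    {S : Submodule R A} (one_mem : (1 : A) ∈ S) (mul_mem : ∀ i, ∀ x ∈ S, f (X i) * x ∈ S) :
    S = ⊤ := by
  rw [eq_top_iff]
  rintro y -
  obtain ⟨p, rfl⟩ := hf y
  induction p using MvPolynomial.induction_on with
  | C r => simpa [Algebra.algebraMap_eq_smul_one] using S.smul_mem r one_mem
  | add p q hp hq => simpa using S.add_mem hp hq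
  | mul_X p i hp => simpa [mul_comm] using mul_mem i _ hp

theorem Submodule.mul_mem_span_of_forall_mul_mem {R A : Type*} [CommSemiring R] [Semiring A]
    [Algebra R A] {s : Set A} {a : A} (h : ∀ x ∈ s, a * x ∈ span R s) {y : A}
    (hy : y ∈ span R s) : a * y ∈ span R s :=
  (span_le (p := (span R s).comap (LinearMap.mulLeft R a))).mpr h hy

theorem LinearMap.bijective_of_surjective_of_finrank_le {K V W : Type*} [DivisionRing K]
    [AddCommGroup V] [Module K V] [AddCommGroup W] [Module K W] [FiniteDimensional K V]
    [FiniteDimensional K W] {f : V →ₗ[K] W} (hf : Function.Surjective f)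
    (h : Module.finrank K V ≤ Module.finrank K W) : Function.Bijective f := by
  have hrange := f.finrank_range_le
  rw [LinearMap.range_eq_top.mpr hf, finrank_top] at hrange
  exact ⟨(injective_iff_surjective_of_finrank_eq_finrank (h.antisymm hrange)).mpr hf, hf⟩

noncomputable def evalCommonZeros : MvPolynomial (Fin 2) ℂ →ₐ[ℂ] ℂ × ℂ × ℂ × ℂ :=
  (aeval ![0, 0]).prod ((aeval ![0, -1/2]).prod ((aeval ![-1/2, 0]).prod (aeval ![1/2, 1/2])))

theorem evalCommonZeros_eq_zero_of_mem {p : MvPolynomial (Fin 2) ℂ} (hp : p ∈ J) :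
    evalCommonZeros p = 0 := by
  refine (Ideal.span_le (I := RingHom.ker evalCommonZeros)).mpr ?_ hp
  rintro q (rfl | rfl) <;> norm_num [evalCommonZeros, t₁, t₂, Prod.ext_iff]

theorem evalCommonZeros_surjective : Function.Surjective evalCommonZeros := by
  rintro ⟨a, b, c, d⟩
  -- each bracket vanishes at three of the four points and takes the value 1 at the remaining one
  refine ⟨C a * (-((2 * t₁ + 1) * (2 * t₂ + 1) * (t₁ + t₂ - 1)))
        + C b * (C (4/3) * ((2 * t₁ + 1) * t₂ * (t₁ + t₂ - 1)))
        + C c * (C (4/3) * ((2 * t₂ + 1) * t₁ * (t₁ + t₂ - 1)))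
        + C d * (4 * (t₁ * t₂)), ?_⟩
  norm_num [evalCommonZeros, t₁, t₂]

noncomputable def quotientEval : (MvPolynomial (Fin 2) ℂ ⧸ J) →ₐ[ℂ] ℂ × ℂ × ℂ × ℂ :=
  Ideal.Quotient.liftₐ J evalCommonZeros fun _ => evalCommonZeros_eq_zero_of_mem

theorem quotientEval_surjective : Function.Surjective quotientEval := fun y =>
  let ⟨p, hp⟩ := evalCommonZeros_surjective y
  ⟨Ideal.Quotient.mk J p, hp⟩

section Quotient

local notation "τ₁" => Ideal.Quotient.mk J t₁
local notation "τ₂" => Ideal.Quotient.mk J t₂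

theorem mk_t₁_relation : τ₁ * (2 * τ₁ - 4 * τ₂ + 1) = 0 := by
  have h : t₁ * (2 * t₁ - 4 * t₂ + 1) ∈ J := Ideal.subset_span (by simp)
  simpa only [map_mul, map_sub, map_add, map_one, map_ofNat] using
    Ideal.Quotient.eq_zero_iff_mem.mpr h

theorem mk_t₂_relation : τ₂ * (2 * τ₂ - 4 * τ₁ + 1) = 0 := by
  have h : t₂ * (2 * t₂ - 4 * t₁ + 1) ∈ J := Ideal.subset_span (by simp)
  simpa only [map_mul, map_sub, map_add, map_one, map_ofNat] using
    Ideal.Quotient.eq_zero_iff_mem.mpr h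

theorem span_monomials_eq_top : Submodule.span ℂ (Set.range ![1, τ₁, τ₂, τ₁ * τ₂]) = ⊤ := by
  set S := Submodule.span ℂ (Set.range ![1, τ₁, τ₂, τ₁ * τ₂])
  have mem (i : Fin 4) : ![1, τ₁, τ₂, τ₁ * τ₂] i ∈ S := Submodule.subset_span ⟨i, rfl⟩
  have mem_of_smul {c : ℂ} {x y} (hc : c ≠ 0) (hy : y ∈ S) (h : c • x = y) : x ∈ S :=
    (S.smul_mem_iff hc).mp (h ▸ hy)
  have sq₁ : τ₁ * τ₁ ∈ S := by
    refine mem_of_smul two_ne_zero (S.sub_mem (S.smul_mem (4 : ℂ) (mem 3)) (mem 1)) ?_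
    simp only [ofNat_smul_eq_nsmul, nsmul_eq_mul, Nat.cast_ofNat, Matrix.cons_val]
    linear_combination mk_t₁_relation
  have sq₂ : τ₂ * τ₂ ∈ S := by
    refine mem_of_smul two_ne_zero (S.sub_mem (S.smul_mem (4 : ℂ) (mem 3)) (mem 2)) ?_
    simp only [ofNat_smul_eq_nsmul, nsmul_eq_mul, Nat.cast_ofNat, Matrix.cons_val]
    linear_combination mk_t₂_relation
  have cube₁ : τ₁ * (τ₁ * τ₂) ∈ S := by
    refine mem_of_smul (by norm_num : (6 : ℂ) ≠ 0) (S.smul_mem (3 : ℂ) (mem 3)) ?_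
    simp only [ofNat_smul_eq_nsmul, nsmul_eq_mul, Nat.cast_ofNat, Matrix.cons_val]
    linear_combination (-τ₂) * mk_t₁_relation - 2 * τ₁ * mk_t₂_relation
  have cube₂ : τ₂ * (τ₁ * τ₂) ∈ S := by
    refine mem_of_smul (by norm_num : (6 : ℂ) ≠ 0) (S.smul_mem (3 : ℂ) (mem 3)) ?_
    simp only [ofNat_smul_eq_nsmul, nsmul_eq_mul, Nat.cast_ofNat, Matrix.cons_val]
    linear_combination (-2 * τ₂) * mk_t₁_relation - τ₁ * mk_t₂_relation
  have mul_mem {a : MvPolynomial (Fin 2) ℂ ⧸ J} (ha : ∀ j, a * ![1, τ₁, τ₂, τ₁ * τ₂] j ∈ S) :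
      ∀ x ∈ S, a * x ∈ S := fun _ =>
    Submodule.mul_mem_span_of_forall_mul_mem (Set.forall_mem_range.mpr ha)
  refine MvPolynomial.submodule_eq_top_of_mul_X_mem (Ideal.Quotient.mkₐ_surjective ℂ J) (mem 0) ?_
  intro i
  fin_cases i
  · refine mul_mem (a := τ₁) fun j => ?_
    fin_cases j
    exacts [by simpa using mem 1, sq₁, mem 3, cube₁]
  · refine mul_mem (a := τ₂) fun j => ?_
    fin_cases j
    exacts [by simpa using mem 2, by simpa [mul_comm] using mem 3, sq₂, cube₂]

end Quotient

/-- ℂ[t₁,t₂]/⟨p₁,p₂⟩ is isomorphic as a ℂ-algebra to ℂ × ℂ × ℂ × ℂ;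
in particular it is 4-dimensional over ℂ. -/
theorem stmt_3 :
    Nonempty ((MvPolynomial (Fin 2) ℂ ⧸ J) ≃ₐ[ℂ] (ℂ × ℂ × ℂ × ℂ)) ∧
      Module.finrank ℂ (MvPolynomial (Fin 2) ℂ ⧸ J) = 4 := by
  have : FiniteDimensional ℂ (MvPolynomial (Fin 2) ℂ ⧸ J) :=
    ⟨span_monomials_eq_top ▸ Submodule.fg_span (Set.finite_range _)⟩
  have hbij : Function.Bijective quotientEval :=
    LinearMap.bijective_of_surjective_of_finrank_le (f := quotientEval.toLinearMap)
      quotientEval_surjective (by simpa using finrank_le_of_span_eq_top span_monomials_eq_top)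
  let e := AlgEquiv.ofBijective quotientEval hbij
  exact ⟨⟨e⟩, e.toLinearEquiv.finrank_eq.trans (by simp)⟩
end

section
/- In the polynomial ring ℂ[t₁,t₂], the ideal generated by p₁ = t₁(2t₁ − 4t₂ + 1) and p₂ = t₂(2t₂ − 4t₁ + 1) is a radical ideal. -/
/-!
Modulo the ideal, `2t₁² ≡ 4t₁t₂ − t₁` and `2t₂² ≡ 4t₁t₂ − t₂`, and combining `t₂p₁` with `2t₁p₂`
gives `t₁²t₂ ≡ t₁t₂/2`, symmetrically `t₁t₂² ≡ t₁t₂/2`. So every polynomial is congruent to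
one of the form `a + b t₁ + c t₂ + d t₁t₂`. The two conics meet in the four points `(0, 0)`,
`(0, −1/2)`, `(−1/2, 0)`, `(1/2, 1/2)`, and such a polynomial vanishing at all four is zero.
Hence the ideal is the vanishing ideal of these four points, which is radical.
-/

open MvPolynomial

theorem MvPolynomial.isRadical_vanishingIdeal {σ k K : Type*} [Field k] [Field K] [Algebra k K]
    (V : Set (σ → K)) : (vanishingIdeal k V).IsRadical := fun p ⟨n, hp⟩ x hx =>
  eq_zero_of_pow_eq_zero (n := n) (map_pow (aeval x) p n ▸ hp x hx)

section

variable (K : Type*) [Field K]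

noncomputable def zhuIdeal : Ideal (MvPolynomial (Fin 2) K) :=
  Ideal.span {X 0 * (2 * X 0 - 4 * X 1 + 1), X 1 * (2 * X 1 - 4 * X 0 + 1)}

def zhuPoints : Set (Fin 2 → K) := {![0, 0], ![0, -1 / 2], ![-1 / 2, 0], ![1 / 2, 1 / 2]}

noncomputable def multiaffine (a b c d : K) : MvPolynomial (Fin 2) K :=
  C a + C b * X 0 + C c * X 1 + C d * (X 0 * X 1)

variable {K}

theorem exists_multiaffine_sub_mem_zhuIdeal (h2 : (2 : K) ≠ 0) (h3 : (3 : K) ≠ 0)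
    (f : MvPolynomial (Fin 2) K) : ∃ a b c d : K, f - multiaffine K a b c d ∈ zhuIdeal K := by
  have h6 : (6 : K) ≠ 0 := by
    rw [show (6 : K) = 2 * 3 by norm_num]
    exact mul_ne_zero h2 h3
  induction f using MvPolynomial.induction_on with
  | C a => exact ⟨a, 0, 0, 0, by simp [multiaffine]⟩
  | add f g hf hg =>
    obtain ⟨a, b, c, d, hf⟩ := hf
    obtain ⟨a', b', c', d', hg⟩ := hg
    refine ⟨a + a', b + b', c + c', d + d', ?_⟩
    convert add_mem hf hg using 1
    simp only [multiaffine, map_add]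
    ring
  | mul_X f i hf =>
    obtain ⟨a, b, c, d, hf⟩ := hf
    -- writing the coefficients as multiples of 2 and 6 keeps the certificates below division-free
    obtain ⟨δ, rfl⟩ : ∃ δ, d = 6 * δ := ⟨d / 6, (mul_div_cancel₀ d h6).symm⟩
    match i with
    | 0 =>
      obtain ⟨β, rfl⟩ : ∃ β, b = 2 * β := ⟨b / 2, (mul_div_cancel₀ b h2).symm⟩
      refine ⟨0, a - β, 0, 4 * β + c + 3 * δ, ?_⟩
      have e : f * X 0 - multiaffine K 0 (a - β) 0 (4 * β + c + 3 * δ) =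
          X 0 * (f - multiaffine K a (2 * β) c (6 * δ)) +
          ((C β - C δ * X 1) * (X 0 * (2 * X 0 - 4 * X 1 + 1)) +
            (-2 * C δ * X 0) * (X 1 * (2 * X 1 - 4 * X 0 + 1))) := by
        simp only [multiaffine, map_add, map_sub, map_mul, map_ofNat, map_zero]
        ring
      rw [e]
      exact add_mem (Ideal.mul_mem_left _ _ hf) (Ideal.mem_span_pair.mpr ⟨_, _, rfl⟩)
    | 1 =>
      obtain ⟨γ, rfl⟩ : ∃ γ, c = 2 * γ := ⟨c / 2, (mul_div_cancel₀ c h2).symm⟩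
      refine ⟨0, 0, a - γ, b + 4 * γ + 3 * δ, ?_⟩
      have e : f * X 1 - multiaffine K 0 0 (a - γ) (b + 4 * γ + 3 * δ) =
          X 1 * (f - multiaffine K a b (2 * γ) (6 * δ)) +
          ((-2 * C δ * X 1) * (X 0 * (2 * X 0 - 4 * X 1 + 1)) +
            (C γ - C δ * X 0) * (X 1 * (2 * X 1 - 4 * X 0 + 1))) := by
        simp only [multiaffine, map_add, map_sub, map_mul, map_ofNat, map_zero]
        ring
      rw [e]
      exact add_mem (Ideal.mul_mem_left _ _ hf) (Ideal.mem_span_pair.mpr ⟨_, _, rfl⟩)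

theorem zhuIdeal_le_vanishingIdeal (h2 : (2 : K) ≠ 0) :
    zhuIdeal K ≤ vanishingIdeal K (zhuPoints K) := by
  rw [zhuIdeal, Ideal.span_le]
  rintro p (rfl | rfl) x (rfl | rfl | rfl | rfl) <;> simp [h2] <;> field_simp <;> ring

theorem multiaffine_eq_zero_of_mem_vanishingIdeal (h2 : (2 : K) ≠ 0) {a b c d : K}
    (h : multiaffine K a b c d ∈ vanishingIdeal K (zhuPoints K)) : multiaffine K a b c d = 0 := by
  simp [zhuPoints, multiaffine] at h
  obtain ⟨rfl, hc, hb, hd⟩ := h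
  obtain rfl : c = 0 := by simpa [h2] using hc
  obtain rfl : b = 0 := by simpa [h2] using hb
  obtain rfl : d = 0 := by simpa [h2] using hd
  simp [multiaffine]

theorem vanishingIdeal_le_zhuIdeal (h2 : (2 : K) ≠ 0) (h3 : (3 : K) ≠ 0) :
    vanishingIdeal K (zhuPoints K) ≤ zhuIdeal K := by
  intro f hf
  obtain ⟨a, b, c, d, hfm⟩ := exists_multiaffine_sub_mem_zhuIdeal h2 h3 f
  have hm : multiaffine K a b c d ∈ vanishingIdeal K (zhuPoints K) := by
    simpa using sub_mem hf (zhuIdeal_le_vanishingIdeal h2 hfm)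
  simpa [multiaffine_eq_zero_of_mem_vanishingIdeal h2 hm] using hfm

theorem zhuIdeal_eq_vanishingIdeal (h2 : (2 : K) ≠ 0) (h3 : (3 : K) ≠ 0) :
    zhuIdeal K = vanishingIdeal K (zhuPoints K) :=
  le_antisymm (zhuIdeal_le_vanishingIdeal h2) (vanishingIdeal_le_zhuIdeal h2 h3)

theorem isRadical_zhuIdeal (h2 : (2 : K) ≠ 0) (h3 : (3 : K) ≠ 0) : (zhuIdeal K).IsRadical :=
  zhuIdeal_eq_vanishingIdeal h2 h3 ▸ isRadical_vanishingIdeal _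

end

/-- The ideal ⟨t₁(2t₁ − 4t₂ + 1), t₂(2t₂ − 4t₁ + 1)⟩ of ℂ[t₁,t₂] is a radical ideal. -/
theorem stmt_4 :
    (Ideal.span {t₁ * (2 * t₁ - 4 * t₂ + 1),
      t₂ * (2 * t₂ - 4 * t₁ + 1)}).IsRadical :=
  isRadical_zhuIdeal (K := ℂ) two_ne_zero three_ne_zero
end
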